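/- The only graph automorphism of the graph 12⁸₂ is the identity. -/

import Mathlib

/-- The vertices of the graph `12⁸₂`. -/
inductive V82 : Type
  | a1 | a2 | a3 | b1 | b2 | b3 | v | w
  deriving DecidableEq

instance : Fintype V82 :=
  ⟨{V82.a1, V82.a2, V82.a3, V82.b1, V82.b2, V82.b3, V82.v, V82.w},
    fun x => by cases x <;> first | decide | simp⟩

open V82 in
/-- The graph `12⁸₂`: the path `a₂a₃b₁b₂b₃a₁` (the 6-cycle minus the edge `a₁a₂`,
which arises through the degree-2 vertex `w`), the chords `a₂b₂`, `a₃b₃`, the edges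
`va₁`, `vb₁`, `vb₂` and the edges `wa₁`, `wa₂` (12 edges in all); `b₂` is the unique
degree-4 vertex and `w` the unique degree-2 vertex. -/
def graph1282 : SimpleGraph V82 :=
  SimpleGraph.fromRel (fun x y => (x, y) ∈
    [(a2, a3), (a3, b1), (b1, b2), (b2, b3), (b3, a1),
     (a2, b2), (a3, b3), (v, a1), (v, b1), (v, b2), (w, a1), (w, a2)])

instance : DecidableRel graph1282.Adj := by
  unfold graph1282
  infer_instance

/-!
Degrees are invariant, so an automorphism fixes `w` and `b₂`, the only vertices of degree 2
and 4. From then on each vertex is pinned down by its degree together with its adjacencies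
to vertices already known to be fixed: `a₂` is the common neighbour of `w` and `b₂`, `a₁` the
other neighbour of `w`; among these four fixed vertices, `a₃` sees only `a₂` and `b₁` only
`b₂`; finally `b₃` and `v`, which both see exactly `a₁` and `b₂` so far, are separated by
`a₃` and `b₁`.
-/

namespace SimpleGraph

variable {V : Type*} {G : SimpleGraph V}

def IsDeterminedBy [Fintype V] [DecidableRel G.Adj] (F : Finset V) (x : V) : Prop :=
  ∀ y, G.degree y = G.degree x → (∀ u ∈ F, G.Adj u y ↔ G.Adj u x) → y = x

instance [Fintype V] [DecidableEq V] [DecidableRel G.Adj] (F : Finset V) :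
    DecidablePred (G.IsDeterminedBy F) := fun _ => by
  unfold IsDeterminedBy
  infer_instance

namespace Iso

theorem adj_apply_iff_of_apply_eq_self (φ : G ≃g G) {u : V} (hu : φ u = u) (x : V) :
    G.Adj u (φ x) ↔ G.Adj u x := by
  conv_lhs => rw [← hu]
  exact φ.map_adj_iff

variable [Fintype V] [DecidableRel G.Adj]

theorem apply_eq_self_of_isDeterminedBy (φ : G ≃g G) {F : Finset V} (hF : ∀ u ∈ F, φ u = u)
    {x : V} (hx : G.IsDeterminedBy F x) : φ x = x :=
  hx (φ x) (φ.degree_eq x) fun u hu => φ.adj_apply_iff_of_apply_eq_self (hF u hu) x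

theorem forall_apply_eq_self_of_isDeterminedBy (φ : G ≃g G) {F S : Finset V}
    (hF : ∀ u ∈ F, φ u = u) (hS : ∀ x ∈ S, G.IsDeterminedBy F x) : ∀ x ∈ S, φ x = x :=
  fun x hx => φ.apply_eq_self_of_isDeterminedBy hF (hS x hx)

end Iso

end SimpleGraph

open V82 in
/-- The only graph automorphism of `12⁸₂` is the identity. -/
theorem stmt13 (φ : graph1282 ≃g graph1282) : ∀ x, φ x = x := by
  have h₁ : ∀ x ∈ ({w, b2} : Finset V82), φ x = x :=
    φ.forall_apply_eq_self_of_isDeterminedBy (F := ∅) (by simp) (by decide)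
  have h₂ : ∀ x ∈ ({w, b2, a1, a2} : Finset V82), φ x = x :=
    φ.forall_apply_eq_self_of_isDeterminedBy h₁ (by decide)
  have h₃ : ∀ x ∈ ({w, b2, a1, a2, a3, b1} : Finset V82), φ x = x :=
    φ.forall_apply_eq_self_of_isDeterminedBy h₂ (by decide)
  have h₄ : ∀ x ∈ (Finset.univ : Finset V82), φ x = x :=
    φ.forall_apply_eq_self_of_isDeterminedBy h₃ (by decide)
  exact fun x => h₄ x (Finset.mem_univ x)
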